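/- Let a, b ∈ Homeo⁺(S¹) with rot(a) = rot(b) = 0, let a_t be a positive one-parameter family commuting with a, and suppose the rotation number of a_t∘b is constant in t and P(a,b) = ∅. Then every point of ∂N(a,b) lies in ∂Fix(a) ∪ b⁻¹(∂Fix(a)). -/

import Mathlib

open Set Function Filter MeasureTheory

/-- An orientation-preserving homeomorphism of `ℝ` commuting with `x ↦ x + 1`,
i.e. a lift of an orientation-preserving circle homeomorphism. -/
structure HomeoZR : Type where
  toFun : ℝ → ℝ
  invFun : ℝ → ℝ
  left_inv : Function.LeftInverse invFun toFun
  right_inv : Function.RightInverse invFun toFun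
  strictMono : StrictMono toFun
  map_add_one : ∀ x, toFun (x + 1) = toFun x + 1

namespace HomeoZR

/-- The identity. -/
protected def id : HomeoZR :=
  ⟨_root_.id, _root_.id, fun _ => rfl, fun _ => rfl, strictMono_id, fun _ => rfl⟩

/-- Composition `f ∘ g`. -/
protected def comp (f g : HomeoZR) : HomeoZR where
  toFun := f.toFun ∘ g.toFun
  invFun := g.invFun ∘ f.invFun
  left_inv := fun x => by
    show g.invFun (f.invFun (f.toFun (g.toFun x))) = x
    rw [f.left_inv, g.left_inv]
  right_inv := fun x => by
    show f.toFun (g.toFun (g.invFun (f.invFun x))) = x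
    rw [g.right_inv, f.right_inv]
  strictMono := f.strictMono.comp g.strictMono
  map_add_one := fun x => by
    show f.toFun (g.toFun (x + 1)) = f.toFun (g.toFun x) + 1
    rw [g.map_add_one, f.map_add_one]

/-- Inverse. -/
protected def symm (f : HomeoZR) : HomeoZR where
  toFun := f.invFun
  invFun := f.toFun
  left_inv := f.right_inv
  right_inv := f.left_inv
  strictMono := by
    intro x y hxy
    rcases lt_trichotomy (f.invFun x) (f.invFun y) with h | h | h
    · exact h
    · exact absurd (by rw [← f.right_inv x, ← f.right_inv y, h]) (ne_of_lt hxy)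
    · have h2 := f.strictMono h
      rw [f.right_inv, f.right_inv] at h2
      exact absurd h2 (lt_asymm hxy)
  map_add_one := fun x => by
    have h1 : f.invFun (f.toFun (f.invFun x + 1)) = f.invFun (x + 1) := by
      rw [f.map_add_one, f.right_inv]
    rw [f.left_inv] at h1
    exact h1.symm

/-- The associated monotone degree-one lift. -/
def toLift (f : HomeoZR) : CircleDeg1Lift :=
  ⟨⟨f.toFun, f.strictMono.monotone⟩, f.map_add_one⟩

/-- The translation number `rot̃(f)`. -/
noncomputable def transNum (f : HomeoZR) : ℝ :=
  f.toLift.translationNumber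

/-- The canonical lift of the underlying circle homeomorphism: the lift whose
translation number lies in `[0,1)`, as a plain function. -/
noncomputable def canon (f : HomeoZR) : ℝ → ℝ :=
  fun x => f.toFun x - (⌊f.transNum⌋ : ℝ)

/-- The periodic points of the underlying circle homeomorphism, as a
`ℤ`-periodic subset of `ℝ`. -/
def Per (f : HomeoZR) : Set ℝ :=
  {x | ∃ n : ℕ, 0 < n ∧ ∃ m : ℤ, f.toFun^[n] x = x + m}

/-- The fixed points of the underlying circle homeomorphism, as a subset of `ℝ`. -/
def FixS (f : HomeoZR) : Set ℝ :=
  {x | ∃ m : ℤ, f.toFun x = x + m}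

/-- `q(f)`: the minimal period of the underlying circle homeomorphism. -/
noncomputable def q (f : HomeoZR) : ℕ :=
  sInf {n : ℕ | 0 < n ∧ ∃ x : ℝ, ∃ m : ℤ, f.toFun^[n] x = x + m}

/-- `p(f)`: the least `p ≥ 0` with `rot(f) = p / q(f)` mod `ℤ`. -/
noncomputable def p (f : HomeoZR) : ℕ :=
  sInf {p : ℕ | ∃ m : ℤ, f.transNum = (p : ℝ) / (f.q : ℝ) + (m : ℝ)}

/-- Natural powers. -/
protected def npow (f : HomeoZR) : ℕ → HomeoZR
  | 0 => HomeoZR.id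
  | n + 1 => (f.npow n).comp f

/-- Integer powers. -/
protected def zpow (f : HomeoZR) (k : ℤ) : HomeoZR :=
  if 0 ≤ k then f.npow k.toNat else f.symm.npow (-k).toNat

end HomeoZR

/-- `f` has rational rotation number. -/
def RatRot (f : HomeoZR) : Prop := ∃ r : ℚ, f.transNum = (r : ℝ)

/-- `F` is a positive one-parameter family (one-parameter group) commuting with `f`:
for `t ≠ 0` the fixed set of `F t` is the frontier of `Per f`, and for `t > 0` the
canonical lift of `F t` moves every point off the frontier strictly to the right. -/
def PosFamily (f : HomeoZR) (F : ℝ → HomeoZR) : Prop :=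
  (∀ s t, (F (s + t)).toFun = (F s).toFun ∘ (F t).toFun) ∧
  (∀ t, (F t).toFun ∘ f.toFun = f.toFun ∘ (F t).toFun) ∧
  (∀ t, t ≠ 0 → (F t).FixS = frontier f.Per) ∧
  (∀ t, 0 < t → ∀ x, x ∉ frontier f.Per → x < (F t).canon x)

/-- `δ_{f,g}(x,t)`, where `F` is a positive one-parameter family commuting with `f`. -/
noncomputable def delta (F : ℝ → HomeoZR) (g : HomeoZR) (x t : ℝ) : ℝ :=
  ((F t).canon ∘ g.canon)^[g.q] x - x - (g.p : ℝ)

/-- Persistent periodic points. -/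
def Pset (F : ℝ → HomeoZR) (g : HomeoZR) : Set ℝ := {x | ∀ t, delta F g x t = 0}

/-- Never-periodic points. -/
def Nset (F : ℝ → HomeoZR) (g : HomeoZR) : Set ℝ := {x | ∀ t, delta F g x t ≠ 0}

/-- Points periodic at a unique time. -/
def Uset (F : ℝ → HomeoZR) (g : HomeoZR) : Set ℝ := {x | ∃! t, delta F g x t = 0}

/-- `x` has a finite orbit in the circle under the group generated by `f` and `g`. -/
def FiniteOrbit (f g : HomeoZR) (x : ℝ) : Prop :=
  ∃ S : Set ℝ, S.Finite ∧ x ∈ S ∧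
    (∀ y ∈ S, ∃ z ∈ S, ∃ m : ℤ, f.toFun y = z + m) ∧
    (∀ y ∈ S, ∃ z ∈ S, ∃ m : ℤ, g.toFun y = z + m)

/-- `τ(f_1, …, f_n) = rot̃(f_n ∘ ⋯ ∘ f_1) − Σ rot̃(f_i)`. -/
noncomputable def tau (L : List HomeoZR) : ℝ :=
  (L.foldl (fun h u => u.comp h) HomeoZR.id).transNum
    - (L.map HomeoZR.transNum).sum


namespace HomeoZR

theorem toLift_apply (f : HomeoZR) (x : ℝ) : f.toLift x = f.toFun x := rfl

theorem surjective (f : HomeoZR) : Function.Surjective f.toFun :=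
  fun y => ⟨f.invFun y, f.right_inv y⟩

theorem continuous' (f : HomeoZR) : Continuous f.toFun :=
  (CircleDeg1Lift.continuous_iff_surjective (f := f.toLift)).2 f.surjective

theorem map_add_int' (f : HomeoZR) (x : ℝ) (m : ℤ) : f.toFun (x + m) = f.toFun x + m :=
  f.toLift.map_add_int x m

theorem comp_toLift (f g : HomeoZR) : (f.comp g).toLift = f.toLift * g.toLift := by
  apply CircleDeg1Lift.ext; intro x; rfl

end HomeoZR

/-- build a `CircleDeg1Lift` from data -/
def mkLift (h : ℝ → ℝ) (mono : Monotone h) (per : ∀ x, h (x + 1) = h x + 1) : CircleDeg1Lift :=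
  ⟨⟨h, mono⟩, per⟩

@[simp] theorem mkLift_apply (h : ℝ → ℝ) (mono per) (x : ℝ) : mkLift h mono per x = h x := rfl

open CircleDeg1Lift in
/-- translation number of a lift shifted by an integer constant. -/
theorem tnum_shift (g : CircleDeg1Lift) (j : ℤ) (h : ℝ → ℝ) (mono per)
    (hh : ∀ x, h x = g x - j) :
    (mkLift h mono per).translationNumber = g.translationNumber - j := by
  have hT : (mkLift h mono per) =
      (translate (Multiplicative.ofAdd ((-j : ℤ) : ℝ)) : CircleDeg1Liftˣ) * g := by
    apply CircleDeg1Lift.ext; intro x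
    have : ((translate (Multiplicative.ofAdd ((-j : ℤ) : ℝ)) : CircleDeg1Liftˣ) * g) x
        = ((-j : ℤ) : ℝ) + g x := rfl
    rw [mkLift_apply, hh, this]
    push_cast; ring
  rw [hT]
  have hc : Commute ((translate (Multiplicative.ofAdd ((-j : ℤ) : ℝ)) : CircleDeg1Liftˣ) :
      CircleDeg1Lift) g := by
    apply CircleDeg1Lift.ext; intro x
    have h1 : (((translate (Multiplicative.ofAdd ((-j : ℤ) : ℝ)) : CircleDeg1Liftˣ) :
        CircleDeg1Lift) * g) x = ((-j : ℤ) : ℝ) + g x := rfl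
    have h2 : (g * ((translate (Multiplicative.ofAdd ((-j : ℤ) : ℝ)) : CircleDeg1Liftˣ) :
        CircleDeg1Lift)) x = g (((-j : ℤ) : ℝ) + x) := rfl
    rw [h1, h2, CircleDeg1Lift.map_int_add]
  rw [CircleDeg1Lift.translationNumber_mul_of_commute hc,
    CircleDeg1Lift.translationNumber_translate]
  push_cast; ring

namespace HomeoZR

theorem canon_def (f : HomeoZR) (x : ℝ) : f.canon x = f.toFun x - (⌊f.transNum⌋ : ℝ) := rfl

theorem canon_strictMono (f : HomeoZR) : StrictMono f.canon := by
  intro x y h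
  simpa [canon_def] using f.strictMono h

theorem canon_continuous (f : HomeoZR) : Continuous f.canon :=
  (f.continuous').sub continuous_const

theorem canon_add_int (f : HomeoZR) (x : ℝ) (m : ℤ) : f.canon (x + m) = f.canon x + m := by
  simp [canon_def, f.map_add_int']; ring

theorem canon_add_one (f : HomeoZR) (x : ℝ) : f.canon (x + 1) = f.canon x + 1 := by
  simpa using f.canon_add_int x 1

/-- the canonical lift as a `CircleDeg1Lift` -/
noncomputable def canonLift (f : HomeoZR) : CircleDeg1Lift :=
  mkLift f.canon f.canon_strictMono.monotone f.canon_add_one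

theorem canonLift_apply (f : HomeoZR) (x : ℝ) : f.canonLift x = f.canon x := rfl

theorem canonLift_tnum (f : HomeoZR) :
    f.canonLift.translationNumber = f.transNum - (⌊f.transNum⌋ : ℤ) :=
  tnum_shift f.toLift ⌊f.transNum⌋ f.canon f.canon_strictMono.monotone f.canon_add_one
    (fun _ => rfl)

end HomeoZR

/-- a continuous nonvanishing function on `ℝ` has constant sign -/
theorem sign_const {D : ℝ → ℝ} (hD : Continuous D) (hne : ∀ x, D x ≠ 0) :
    (∀ x, 0 < D x) ∨ (∀ x, D x < 0) := by
  by_cases h : ∀ x, 0 < D x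
  · exact Or.inl h
  · push_neg at h
    obtain ⟨x₀, hx₀⟩ := h
    have hx₀' : D x₀ < 0 := lt_of_le_of_ne hx₀ (hne x₀)
    refine Or.inr fun x => ?_
    by_contra hx
    push_neg at hx
    have hx' : 0 < D x := lt_of_le_of_ne hx (Ne.symm (hne x))
    have : (0 : ℝ) ∈ Set.uIcc (D x₀) (D x) := by
      rw [Set.mem_uIcc]
      exact Or.inl ⟨le_of_lt hx₀', le_of_lt hx'⟩
    obtain ⟨z, _, hz⟩ := intermediate_value_uIcc hD.continuousOn this
    exact hne z hz

namespace HomeoZR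

/-- if the fixed set is empty, the canonical displacement lies in `(0,1)` everywhere -/
theorem canon_disp_mem (f : HomeoZR) (hfix : f.FixS = ∅) (x : ℝ) :
    x < f.canon x ∧ f.canon x < x + 1 := by
  have hni : ∀ y : ℝ, ∀ k : ℤ, f.toFun y - y ≠ (k : ℝ) := by
    intro y k hk
    have : y ∈ f.FixS := ⟨k, by linarith [hk]⟩
    simp [hfix] at this
  have hDc : Continuous (fun y : ℝ => f.toFun y - y) := f.continuous'.sub continuous_id
  have hIVT : ∀ (y₁ y₂ : ℝ) (c : ℝ), f.toFun y₁ - y₁ ≤ c → c ≤ f.toFun y₂ - y₂ →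
      ∃ z, f.toFun z - z = c := by
    intro y₁ y₂ c h1 h2
    have : c ∈ Set.uIcc (f.toFun y₁ - y₁) (f.toFun y₂ - y₂) := by
      rw [Set.mem_uIcc]; exact Or.inl ⟨h1, h2⟩
    obtain ⟨z, _, hz⟩ := intermediate_value_uIcc hDc.continuousOn this
    exact ⟨z, hz⟩
  obtain ⟨n, hn1, hn2⟩ : ∃ n : ℤ, (n : ℝ) < f.toFun 0 - 0 ∧ f.toFun 0 - 0 < (n : ℝ) + 1 := by
    refine ⟨⌊f.toFun 0 - 0⌋, lt_of_le_of_ne (Int.floor_le _) (Ne.symm (hni 0 _)), ?_⟩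
    exact Int.lt_floor_add_one _
  have hall : ∀ y, (n : ℝ) < f.toFun y - y ∧ f.toFun y - y < (n : ℝ) + 1 := by
    intro y
    constructor
    · by_contra hy
      push_neg at hy
      have hy' : f.toFun y - y < (n : ℝ) := lt_of_le_of_ne hy (hni y n)
      obtain ⟨z, hz⟩ := hIVT y 0 (n : ℝ) (le_of_lt hy') (le_of_lt hn1)
      exact hni z n hz
    · by_contra hy
      push_neg at hy
      have hy' : (n : ℝ) + 1 < f.toFun y - y := by
        rcases lt_or_eq_of_le hy with h | h
        · exact h
        · exfalso
          refine hni y (n + 1) ?_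
          push_cast
          linarith
      obtain ⟨z, hz⟩ := hIVT 0 y ((n : ℝ) + 1) (le_of_lt hn2) (le_of_lt hy')
      refine hni z (n + 1) ?_
      push_cast
      linarith
  have hτle : (n : ℝ) ≤ f.transNum := by
    refine CircleDeg1Lift.le_translationNumber_of_add_le f.toLift (fun y => ?_)
    have := (hall y).1
    show y + (n : ℝ) ≤ f.toFun y
    linarith
  have hτge : f.transNum ≤ (n : ℝ) + 1 := by
    refine CircleDeg1Lift.translationNumber_le_of_le_add f.toLift (fun y => ?_)
    have := (hall y).2
    show f.toFun y ≤ y + ((n : ℝ) + 1)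
    linarith
  have hτne : ∀ k : ℤ, f.transNum ≠ (k : ℝ) := by
    intro k hk
    obtain ⟨z, hz⟩ := (CircleDeg1Lift.translationNumber_eq_int_iff f.toLift f.continuous').1 hk
    have : z ∈ f.FixS := ⟨k, hz⟩
    simp [hfix] at this
  have hfl : (⌊f.transNum⌋ : ℝ) = (n : ℝ) := by
    have h1 : (n : ℝ) < f.transNum := lt_of_le_of_ne hτle (Ne.symm (hτne n))
    have h2 : f.transNum < (n : ℝ) + 1 := by
      rcases lt_or_eq_of_le hτge with h | h
      · exact h
      · exfalso
        refine hτne (n + 1) ?_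
        push_cast
        linarith
    have : ⌊f.transNum⌋ = n := Int.floor_eq_iff.2 ⟨le_of_lt h1, by push_cast; linarith⟩
    exact_mod_cast congrArg (fun m : ℤ => (m : ℝ)) this
  have h := hall x
  rw [canon_def, hfl]
  constructor <;> [linarith [h.1]; linarith [h.2]]

end HomeoZR

section Family

variable {A : ℝ → HomeoZR}
variable (hGrp : ∀ s t : ℝ, (A (s + t)).toFun = (A s).toFun ∘ (A t).toFun)

include hGrp in
theorem A_zero : ∀ x, (A 0).toFun x = x := by
  intro x
  have h := congrFun (hGrp 0 0) x
  rw [zero_add] at h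
  exact ((A 0).strictMono.injective h).symm

include hGrp in
theorem A_inv (t : ℝ) (x : ℝ) : (A t).toFun ((A (-t)).toFun x) = x := by
  have h := congrFun (hGrp t (-t)) x
  rw [add_neg_cancel] at h
  simp only [Function.comp_apply] at h
  rw [← h, A_zero hGrp]

include hGrp in
theorem A_comp (s t : ℝ) (x : ℝ) : (A s).toFun ((A t).toFun x) = (A (s + t)).toFun x :=
  (congrFun (hGrp s t) x).symm

include hGrp in
theorem A_agree_fix {t s : ℝ} (hts : t ≠ s) {x : ℝ} (j : ℤ)
    (h : (A t).toFun x = (A s).toFun x + j) : ((A s).toFun x) ∈ (A (t - s)).FixS := by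
  refine ⟨j, ?_⟩
  have := A_comp hGrp (t - s) s x
  rw [sub_add_cancel] at this
  rw [this, h]

end Family

section Dense

variable {A : ℝ → HomeoZR}
variable (hGrp : ∀ s t : ℝ, (A (s + t)).toFun = (A s).toFun ∘ (A t).toFun)
variable (hfree : ∀ u : ℝ, u ≠ 0 → (A u).FixS = ∅)

include hGrp hfree in
/-- with all nontrivial elements fixed-point-free, every orbit is dense mod 1;
stated for the canonical lifts in the fundamental window. -/
theorem orbit_dense (w α₁ α₂ : ℝ) (h1 : w < α₁) (h12 : α₁ < α₂) (h2 : α₂ < w + 1) :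
    ∃ t : ℝ, t ≠ 0 ∧ α₁ < (A t).canon w ∧ (A t).canon w < α₂ := by
  classical
  set O : Set ℝ := {x : ℝ | ∃ t : ℝ, ∃ j : ℤ, x = (A t).toFun w + j} with hO
  set S : Set ℝ := closure O with hS
  have hOmem : ∀ (t : ℝ) (j : ℤ), (A t).toFun w + j ∈ O := fun t j => ⟨t, j, rfl⟩
  have hSinv : ∀ u : ℝ, ∀ z ∈ S, (A u).toFun z ∈ S := by
    intro u z hz
    have hmaps : Set.MapsTo (A u).toFun O O := by
      rintro x ⟨t, j, rfl⟩
      rw [(A u).map_add_int', A_comp hGrp]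
      exact hOmem _ _
    have := (Set.MapsTo.closure hmaps (A u).continuous') hz
    exact this
  -- main claim : S = univ
  have hSuniv : S = Set.univ := by
    by_contra hne
    obtain ⟨xh, hxh⟩ : ∃ xh, xh ∉ S := by
      by_contra hc
      push_neg at hc
      exact hne (Set.eq_univ_iff_forall.2 hc)
    have hSclosed : IsClosed S := isClosed_closure
    -- the gap around xh
    have hpne : (S ∩ Set.Iic xh).Nonempty := by
      refine ⟨w + (⌊xh - w⌋ - 1 : ℤ), subset_closure ?_, ?_⟩
      · have := hOmem 0 (⌊xh - w⌋ - 1)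
        rwa [A_zero hGrp] at this
      · simp only [Set.mem_Iic]
        push_cast
        have := Int.floor_le (xh - w)
        linarith
    have hqne : (S ∩ Set.Ici xh).Nonempty := by
      refine ⟨w + (⌊xh - w⌋ + 1 : ℤ), subset_closure ?_, ?_⟩
      · have := hOmem 0 (⌊xh - w⌋ + 1)
        rwa [A_zero hGrp] at this
      · simp only [Set.mem_Ici]
        push_cast
        have := Int.lt_floor_add_one (xh - w)
        linarith
    set p : ℝ := sSup (S ∩ Set.Iic xh) with hp
    set q : ℝ := sInf (S ∩ Set.Ici xh) with hq
    have hbddA : BddAbove (S ∩ Set.Iic xh) := ⟨xh, fun z hz => hz.2⟩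
    have hbddB : BddBelow (S ∩ Set.Ici xh) := ⟨xh, fun z hz => hz.2⟩
    have hpS : p ∈ S ∩ Set.Iic xh :=
      (hSclosed.inter isClosed_Iic).csSup_mem hpne hbddA
    have hqS : q ∈ S ∩ Set.Ici xh :=
      (hSclosed.inter isClosed_Ici).csInf_mem hqne hbddB
    have hpx : p < xh := lt_of_le_of_ne hpS.2 (fun h => hxh (h ▸ hpS.1))
    have hxq : xh < q := lt_of_le_of_ne (hqS.2) (fun h => hxh (h.symm ▸ hqS.1))
    have hgap : ∀ z ∈ S, z ∉ Set.Ioo p q := by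
      rintro z hz ⟨hz1, hz2⟩
      rcases le_or_gt z xh with h | h
      · exact absurd (le_csSup hbddA ⟨hz, h⟩) (not_le.2 hz1)
      · exact absurd (csInf_le hbddB ⟨hz, le_of_lt h⟩) (not_le.2 hz2)
    -- each u gives a gap (A u p, A u q) disjoint from S
    have hgapu : ∀ u : ℝ, ∀ z ∈ S, z ∉ Set.Ioo ((A u).toFun p) ((A u).toFun q) := by
      rintro u z hz ⟨hz1, hz2⟩
      have hζS : (A (-u)).toFun z ∈ S := hSinv (-u) z hz
      have h1 : p < (A (-u)).toFun z := by
        have := (A (-u)).strictMono hz1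
        rwa [show (A (-u)).toFun ((A u).toFun p) = p by
          have h := A_comp hGrp (-u) u p
          rw [neg_add_cancel] at h
          rw [h, A_zero hGrp]] at this
      have h2 : (A (-u)).toFun z < q := by
        have := (A (-u)).strictMono hz2
        rwa [show (A (-u)).toFun ((A u).toFun q) = q by
          have h := A_comp hGrp (-u) u q
          rw [neg_add_cancel] at h
          rw [h, A_zero hGrp]] at this
      exact hgap _ hζS ⟨h1, h2⟩
    have hpdist : ∀ u u' : ℝ, u ≠ u' → (A u).toFun p ≠ (A u').toFun p := by
      intro u u' huu h
      have := A_agree_fix hGrp (t := u) (s := u') huu (j := 0) (by rw [h]; push_cast; ring)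
      rw [hfree (u - u') (sub_ne_zero.2 huu)] at this
      exact this
    -- choose rationals in the gaps
    have hgapne : ∀ u : ℝ, ∃ r : ℚ, (A u).toFun p < (r : ℝ) ∧ (r : ℝ) < (A u).toFun q := by
      intro u
      exact exists_rat_btwn ((A u).strictMono (lt_trans hpx hxq))
    choose r hr using hgapne
    have hrinj : Function.Injective r := by
      intro u u' h
      by_contra huu
      -- wlog (A u) p < (A u') p
      have key : ∀ v v' : ℝ, (A v).toFun p < (A v').toFun p →
          ((r v : ℝ)) ∈ Set.Ioo ((A v).toFun p) ((A v).toFun q) →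
          ((r v' : ℝ)) ∈ Set.Ioo ((A v').toFun p) ((A v').toFun q) →
          (r v : ℝ) = (r v' : ℝ) → False := by
        intro v v' hlt hv hv' hrr
        have hpS' : (A v').toFun p ∈ S := hSinv v' p hpS.1
        refine hgapu v ((A v').toFun p) hpS' ⟨hlt, ?_⟩
        calc (A v').toFun p < (r v' : ℝ) := hv'.1
          _ = (r v : ℝ) := hrr.symm
          _ < (A v).toFun q := hv.2
      rcases lt_trichotomy ((A u).toFun p) ((A u').toFun p) with hlt | heq | hgt
      · exact key u u' hlt ⟨(hr u).1, (hr u).2⟩ ⟨(hr u').1, (hr u').2⟩ (by rw [h])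
      · exact hpdist u u' huu heq
      · exact key u' u hgt ⟨(hr u').1, (hr u').2⟩ ⟨(hr u).1, (hr u).2⟩ (by rw [h])
    have : Countable ℝ := hrinj.countable
    exact Cardinal.not_countable_real Set.countable_univ
  -- now use density
  have hxhmem : (α₁ + α₂) / 2 ∈ S := by rw [hSuniv]; trivial
  rw [hS] at hxhmem
  obtain ⟨o, hoO, hdist⟩ := Metric.mem_closure_iff.1 hxhmem ((α₂ - α₁) / 2) (by linarith)
  obtain ⟨t, j, rfl⟩ := hoO
  have habs := abs_lt.1 (by simpa [Real.dist_eq] using hdist)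
  have ho1 : α₁ < (A t).toFun w + j := by cases habs; linarith
  have ho2 : (A t).toFun w + j < α₂ := by cases habs; linarith
  rcases eq_or_ne t 0 with rfl | ht
  · exfalso
    rw [A_zero hGrp] at ho1 ho2
    have hj1 : (0 : ℝ) < j := by linarith
    have hj2 : (j : ℝ) < 1 := by linarith
    have : (0 : ℤ) < j := by exact_mod_cast hj1
    have : (1 : ℝ) ≤ (j : ℝ) := by exact_mod_cast this
    linarith
  · refine ⟨t, ht, ?_, ?_⟩
    · have hd := (A t).canon_disp_mem (hfree t ht) w
      have hce : (A t).toFun w + j = (A t).canon w + (j + ⌊(A t).transNum⌋ : ℤ) := by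
        rw [HomeoZR.canon_def]
        push_cast
        ring
      rw [hce] at ho1 ho2
      have he0 : ((j + ⌊(A t).transNum⌋ : ℤ) : ℝ) = 0 := by
        by_contra hne0
        rcases lt_or_gt_of_ne hne0 with hl | hg
        · have : ((j + ⌊(A t).transNum⌋ : ℤ) : ℝ) ≤ -1 := by
            have : (j + ⌊(A t).transNum⌋ : ℤ) < 0 := by exact_mod_cast hl
            have : (j + ⌊(A t).transNum⌋ : ℤ) ≤ -1 := by omega
            exact_mod_cast this
          linarith [hd.2]
        · have : (1 : ℝ) ≤ ((j + ⌊(A t).transNum⌋ : ℤ) : ℝ) := by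
            have : (0 : ℤ) < (j + ⌊(A t).transNum⌋ : ℤ) := by exact_mod_cast hg
            have : (1 : ℤ) ≤ (j + ⌊(A t).transNum⌋ : ℤ) := by omega
            exact_mod_cast this
          linarith [hd.1]
      rw [he0] at ho1
      linarith
    · have hd := (A t).canon_disp_mem (hfree t ht) w
      have hce : (A t).toFun w + j = (A t).canon w + (j + ⌊(A t).transNum⌋ : ℤ) := by
        rw [HomeoZR.canon_def]
        push_cast
        ring
      rw [hce] at ho1 ho2
      have he0 : ((j + ⌊(A t).transNum⌋ : ℤ) : ℝ) = 0 := by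
        by_contra hne0
        rcases lt_or_gt_of_ne hne0 with hl | hg
        · have : ((j + ⌊(A t).transNum⌋ : ℤ) : ℝ) ≤ -1 := by
            have : (j + ⌊(A t).transNum⌋ : ℤ) < 0 := by exact_mod_cast hl
            have : (j + ⌊(A t).transNum⌋ : ℤ) ≤ -1 := by omega
            exact_mod_cast this
          linarith [hd.2]
        · have : (1 : ℝ) ≤ ((j + ⌊(A t).transNum⌋ : ℤ) : ℝ) := by
            have : (0 : ℤ) < (j + ⌊(A t).transNum⌋ : ℤ) := by exact_mod_cast hg
            have : (1 : ℤ) ≤ (j + ⌊(A t).transNum⌋ : ℤ) := by omega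
            exact_mod_cast this
          linarith [hd.1]
      rw [he0] at ho2
      linarith

end Dense

theorem periodic_add_int {f : ℝ → ℝ} (h : ∀ x, f (x + 1) = f x) (x : ℝ) (n : ℤ) :
    f (x + n) = f x := by
  induction n using Int.induction_on with
  | zero => simp
  | succ k ih =>
      have : x + ((k : ℤ) + 1 : ℤ) = (x + (k : ℤ)) + 1 := by push_cast; ring
      rw [this, h, ih]
  | pred k ih =>
      have : x + (-(k : ℤ) - 1 : ℤ) + 1 = x + (-(k : ℤ) : ℤ) := by push_cast; ring
      rw [← ih, ← this, h]

/-- common sub-equilibrium point for a totally ordered family of periodic displacement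
functions, each having a zero. -/
theorem exists_common_point {T : Set ℝ} (hT : T.Nonempty) (F : ℝ → ℝ → ℝ)
    (hcont : ∀ u ∈ T, Continuous (F u))
    (hper : ∀ u ∈ T, ∀ z, F u (z + 1) = F u z)
    (hne : ∀ u ∈ T, ∃ z, F u z = 0)
    (hdir : ∀ u ∈ T, ∀ v ∈ T, (∀ z, F u z ≤ F v z) ∨ (∀ z, F v z ≤ F u z)) :
    ∃ z, ∀ u ∈ T, F u z ≤ 0 := by
  haveI : Nonempty T := hT.to_subtype
  set E : T → Set ℝ := fun u => {z ∈ Set.Icc (0 : ℝ) 1 | F u z ≤ 0} with hE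
  have hEclosed : ∀ u : T, IsClosed (E u) := by
    intro u
    exact isClosed_Icc.inter (isClosed_le (hcont u u.2) continuous_const)
  have hEcpt : ∀ u : T, IsCompact (E u) := by
    intro u
    exact isCompact_Icc.of_isClosed_subset (hEclosed u) (fun z hz => hz.1)
  have hEne : ∀ u : T, (E u).Nonempty := by
    intro u
    obtain ⟨z, hz⟩ := hne u u.2
    refine ⟨Int.fract z, ⟨(Int.fract_nonneg z), le_of_lt (Int.fract_lt_one z)⟩, ?_⟩
    have : F u (Int.fract z) = F u z := by
      rw [Int.fract]
      have := periodic_add_int (hper u u.2) (z - ⌊z⌋) ⌊z⌋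
      rw [sub_add_cancel] at this
      exact this.symm
    rw [this, hz]
  have hEdir : Directed (· ⊇ ·) E := by
    intro u v
    rcases hdir u u.2 v v.2 with h | h
    · exact ⟨v, fun z hz => ⟨hz.1, le_trans (h z) hz.2⟩, fun z hz => hz⟩
    · exact ⟨u, fun z hz => hz, fun z hz => ⟨hz.1, le_trans (h z) hz.2⟩⟩
  obtain ⟨z, hz⟩ := IsCompact.nonempty_iInter_of_directed_nonempty_isCompact_isClosed
    E hEdir hEne hEcpt hEclosed
  refine ⟨z, fun u hu => ?_⟩
  have := Set.mem_iInter.1 hz ⟨u, hu⟩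
  exact this.2

section DeltaEmpty

variable {b : HomeoZR} {A : ℝ → HomeoZR}

/-- the lift of `(A t).canon ∘ b.canon` -/
noncomputable def leafComp (A : ℝ → HomeoZR) (b : HomeoZR) (t : ℝ) : CircleDeg1Lift :=
  mkLift (fun x => (A t).canon (b.canon x))
    (fun x y h => ((A t).canon_strictMono.monotone (b.canon_strictMono.monotone h)))
    (fun x => by
      show (A t).canon (b.canon (x + 1)) = (A t).canon (b.canon x) + 1
      rw [b.canon_add_one, (A t).canon_add_one])

theorem leafComp_apply (t : ℝ) (x : ℝ) : leafComp A b t x = (A t).canon (b.canon x) := rfl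

theorem leafComp_continuous (t : ℝ) : Continuous (⇑(leafComp A b t)) := by
  have : ⇑(leafComp A b t) = fun x => (A t).canon (b.canon x) := rfl
  rw [this]
  exact (A t).canon_continuous.comp b.canon_continuous

theorem leafComp_tnum {mb : ℤ} (hb0 : b.transNum = (mb : ℝ)) (t : ℝ) :
    (leafComp A b t).translationNumber
      = ((A t).comp b).transNum - (mb + ⌊(A t).transNum⌋ : ℤ) := by
  refine tnum_shift ((A t).comp b).toLift (mb + ⌊(A t).transNum⌋) _ _ _ (fun x => ?_)
  have h1 : b.canon x = b.toFun x + ((-mb : ℤ) : ℝ) := by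
    rw [HomeoZR.canon_def, hb0, Int.floor_intCast]
    push_cast; ring
  rw [HomeoZR.canon_def, h1, (A t).map_add_int']
  have h2 : ((A t).comp b).toLift x = (A t).toFun (b.toFun x) := rfl
  rw [h2]
  push_cast; ring

theorem bcanon_tnum {mb : ℤ} (hb0 : b.transNum = (mb : ℝ)) :
    b.canonLift.translationNumber = 0 := by
  rw [HomeoZR.canonLift_tnum, hb0, Int.floor_intCast]
  simp

/-- a fixed point of the canonical lift of `b` -/
theorem bcanon_fixed {mb : ℤ} (hb0 : b.transNum = (mb : ℝ)) : ∃ x, b.canon x = x := by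
  have h := (CircleDeg1Lift.translationNumber_eq_int_iff b.canonLift
    (by
      have : ⇑b.canonLift = b.canon := rfl
      rw [this]; exact b.canon_continuous) (m := 0)).1
    (by rw [bcanon_tnum hb0]; simp)
  obtain ⟨x, hx⟩ := h
  exact ⟨x, by simpa using (show b.canon x = x + ((0 : ℤ) : ℝ) from hx)⟩

end DeltaEmpty

theorem deltaEmpty_false (b : HomeoZR) (A : ℝ → HomeoZR)
    (hGrp : ∀ s t : ℝ, (A (s + t)).toFun = (A s).toFun ∘ (A t).toFun)
    (hfree : ∀ u : ℝ, u ≠ 0 → (A u).FixS = ∅)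
    (hb0 : ∃ m : ℤ, b.transNum = (m : ℝ))
    (hconst : ∀ t : ℝ, ∃ m : ℤ, ((A t).comp b).transNum = b.transNum + m) :
    False := by
  classical
  obtain ⟨mb, hmb⟩ := hb0
  obtain ⟨x₀, hx₀⟩ := bcanon_fixed hmb
  -- bounds on the canonical displacement of b
  have hbc1 : ∀ z : ℝ, z - 1 < b.canon z := by
    intro z
    have h1 : x₀ + ((⌊z - x₀⌋ : ℤ) : ℝ) ≤ z := by
      have := Int.floor_le (z - x₀); linarith
    have h2 := b.canon_strictMono.monotone h1
    rw [b.canon_add_int, hx₀] at h2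
    have := Int.lt_floor_add_one (z - x₀)
    linarith
  have hbc2 : ∀ z : ℝ, b.canon z < z + 1 := by
    intro z
    have h1 : z < x₀ + ((⌊z - x₀⌋ + 1 : ℤ) : ℝ) := by
      have := Int.lt_floor_add_one (z - x₀); push_cast; linarith
    have h2 := b.canon_strictMono h1
    rw [b.canon_add_int, hx₀] at h2
    have := Int.floor_le (z - x₀)
    push_cast at h2
    linarith
  -- displacement of leaves
  have hdisp : ∀ t : ℝ, t ≠ 0 → ∀ x, x < (A t).canon x ∧ (A t).canon x < x + 1 :=
    fun t ht x => (A t).canon_disp_mem (hfree t ht) x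
  -- total order on leaves
  have hord : ∀ t s : ℝ, t ≠ s →
      (∀ x, (A t).canon x < (A s).canon x) ∨ (∀ x, (A s).canon x < (A t).canon x) := by
    intro t s hts
    have hnv : ∀ x, (A s).canon x - (A t).canon x ≠ 0 := by
      intro x h
      have h' : (A s).canon x = (A t).canon x := by linarith [sub_eq_zero.1 h]
      have heq : (A t).toFun x = (A s).toFun x
          + ((⌊(A t).transNum⌋ - ⌊(A s).transNum⌋ : ℤ) : ℝ) := by
        simp only [HomeoZR.canon_def] at h'
        push_cast
        linarith
      have hmem := A_agree_fix hGrp hts _ heq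
      rw [hfree (t - s) (sub_ne_zero.2 hts)] at hmem
      exact hmem
    have hc : Continuous fun x => (A s).canon x - (A t).canon x :=
      ((A s).canon_continuous).sub ((A t).canon_continuous)
    rcases sign_const hc hnv with h | h
    · exact Or.inl (fun x => by have := h x; linarith)
    · exact Or.inr (fun x => by have := h x; linarith)
  -- translation numbers of the composed leaves are integers in {0, 1}
  have hk : ∀ t : ℝ, ∃ k : ℤ, (leafComp A b t).translationNumber = (k : ℝ) := by
    intro t
    obtain ⟨m, hm⟩ := hconst t
    refine ⟨m - ⌊(A t).transNum⌋, ?_⟩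
    rw [leafComp_tnum hmb t, hm, hmb]
    push_cast
    ring
  have hmono : ∀ t s : ℝ, (∀ x, (A t).canon x < (A s).canon x) →
      (leafComp A b t).translationNumber ≤ (leafComp A b s).translationNumber := by
    intro t s h
    refine CircleDeg1Lift.translationNumber_mono ?_
    intro x
    exact le_of_lt (h (b.canon x))
  have hk01 : ∀ t : ℝ, t ≠ 0 → (leafComp A b t).translationNumber = 0 ∨
      (leafComp A b t).translationNumber = 1 := by
    intro t ht
    obtain ⟨k, hkt⟩ := hk t
    have hge : (0 : ℝ) ≤ (leafComp A b t).translationNumber := by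
      have hle1 : b.canonLift ≤ leafComp A b t := by
        intro x
        exact le_of_lt ((hdisp t ht (b.canon x)).1)
      have := CircleDeg1Lift.translationNumber_mono hle1
      rwa [bcanon_tnum hmb] at this
    have hle : (leafComp A b t).translationNumber ≤ 1 := by
      set U : CircleDeg1Lift := mkLift (fun x => b.canon x + 1)
        (fun x y h => by simpa using b.canon_strictMono.monotone h)
        (fun x => by show b.canon (x+1) + 1 = b.canon x + 1 + 1; rw [b.canon_add_one]) with hU
      have hUt : U.translationNumber = 1 := by
        have := tnum_shift b.canonLift (-1) (fun x => b.canon x + 1)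
          (fun x y h => by simpa using b.canon_strictMono.monotone h)
          (fun x => by show b.canon (x+1) + 1 = b.canon x + 1 + 1; rw [b.canon_add_one])
          (fun x => by rw [HomeoZR.canonLift_apply]; push_cast; ring)
        rw [bcanon_tnum hmb] at this
        rw [hU]
        rw [this]
        push_cast
        ring
      have hle2 : leafComp A b t ≤ U := by
        intro x
        exact le_of_lt ((hdisp t ht (b.canon x)).2)
      have := CircleDeg1Lift.translationNumber_mono hle2
      rwa [hUt] at this
    rw [hkt] at hge hle ⊢
    have h0 : (0 : ℤ) ≤ k := by exact_mod_cast hge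
    have h1 : k ≤ 1 := by exact_mod_cast hle
    interval_cases k
    · left; norm_num
    · right; norm_num
  have hfix0 : ∀ t : ℝ, (leafComp A b t).translationNumber = 0 →
      ∃ z, (A t).canon (b.canon z) = z := by
    intro t h
    obtain ⟨z, hz⟩ := (CircleDeg1Lift.translationNumber_eq_int_iff (leafComp A b t)
      (leafComp_continuous t) (m := 0)).1 (by rw [h]; simp)
    exact ⟨z, by simpa [leafComp_apply] using hz⟩
  have hfix1 : ∀ t : ℝ, (leafComp A b t).translationNumber = 1 →
      ∃ z, (A t).canon (b.canon z) = z + 1 := by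
    intro t h
    obtain ⟨z, hz⟩ := (CircleDeg1Lift.translationNumber_eq_int_iff (leafComp A b t)
      (leafComp_continuous t) (m := 1)).1 (by rw [h]; simp)
    exact ⟨z, by simpa [leafComp_apply] using hz⟩
  set Z : Set ℝ := {t : ℝ | t ≠ 0 ∧ (leafComp A b t).translationNumber = 0} with hZ
  by_cases hZne : Z.Nonempty
  · -- there are leaves with a fixed point
    obtain ⟨zs, hzs'⟩ := exists_common_point hZne
      (fun u z => (A u).canon (b.canon z) - z)
      (fun u _ => (((A u).canon_continuous.comp b.canon_continuous).sub continuous_id))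
      (fun u _ z => by
        show (A u).canon (b.canon (z + 1)) - (z + 1) = (A u).canon (b.canon z) - z
        rw [b.canon_add_one, (A u).canon_add_one]; ring)
      (fun u hu => by
        obtain ⟨z, hz⟩ := hfix0 u hu.2
        refine ⟨z, ?_⟩
        show (A u).canon (b.canon z) - z = 0
        rw [hz]; ring)
      (fun u hu v hv => by
        rcases eq_or_ne u v with rfl | huv
        · exact Or.inl (fun z => le_refl _)
        · rcases hord u v huv with h | h
          · refine Or.inl (fun z => ?_)
            show (A u).canon (b.canon z) - z ≤ (A v).canon (b.canon z) - z
            have := h (b.canon z); linarith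
          · refine Or.inr (fun z => ?_)
            show (A v).canon (b.canon z) - z ≤ (A u).canon (b.canon z) - z
            have := h (b.canon z); linarith)
    have hzs : ∀ u ∈ Z, (A u).canon (b.canon zs) ≤ zs := by
      intro u hu
      have h := hzs' u hu
      have h' : (A u).canon (b.canon zs) - zs ≤ 0 := h
      linarith
    set θ : ℝ := sSup ((fun u => (A u).canon x₀) '' Z) with hθ
    have hΘne : ((fun u => (A u).canon x₀) '' Z).Nonempty := hZne.image _
    have hΘbdd : BddAbove ((fun u => (A u).canon x₀) '' Z) := by
      refine ⟨x₀ + 1, ?_⟩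
      rintro r ⟨u, hu, rfl⟩
      exact le_of_lt (hdisp u hu.1 x₀).2
    have hθgt : x₀ < θ := by
      obtain ⟨u, hu⟩ := hZne
      exact lt_of_lt_of_le (hdisp u hu.1 x₀).1 (le_csSup hΘbdd ⟨u, hu, rfl⟩)
    have hθle : θ ≤ x₀ + 1 := csSup_le hΘne (by
      rintro r ⟨u, hu, rfl⟩
      exact le_of_lt (hdisp u hu.1 x₀).2)
    have hbelow : ∀ t : ℝ, t ≠ 0 → (A t).canon x₀ < θ → t ∈ Z := by
      intro t ht hlt
      obtain ⟨r, ⟨u, huZ, rfl⟩, hr⟩ := exists_lt_of_lt_csSup hΘne hlt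
      have htu : t ≠ u := by
        intro h
        rw [h] at hr
        exact lt_irrefl _ hr
      rcases hord t u htu with h | h
      · have hle := hmono t u h
        rw [huZ.2] at hle
        rcases hk01 t ht with h0 | h1
        · exact ⟨ht, h0⟩
        · rw [h1] at hle; linarith
      · exact absurd (h x₀) (not_lt.2 (le_of_lt hr))
    by_cases hθtop : θ < x₀ + 1
    · -- main case : some leaves have no fixed point
      set W : Set ℝ := {v : ℝ | v ≠ 0 ∧ θ < (A v).canon x₀} with hW
      have hWne : W.Nonempty := by
        obtain ⟨t, ht, ht1, _⟩ := orbit_dense hGrp hfree x₀ θ ((θ + (x₀ + 1)) / 2)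
          hθgt (by linarith) (by linarith)
        exact ⟨t, ht, ht1⟩
      have hW1 : ∀ v ∈ W, (leafComp A b v).translationNumber = 1 := by
        intro v hv
        rcases hk01 v hv.1 with h0 | h1
        · exfalso
          have : v ∈ Z := ⟨hv.1, h0⟩
          have := le_csSup hΘbdd ⟨v, this, rfl⟩
          exact absurd hv.2 (not_lt.2 this)
        · exact h1
      obtain ⟨ws, hws'⟩ := exists_common_point hWne
        (fun v z => z + 1 - (A v).canon (b.canon z))
        (fun v _ => by
          exact (continuous_id.add continuous_const).sub
            ((A v).canon_continuous.comp b.canon_continuous))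
        (fun v _ z => by
          show z + 1 + 1 - (A v).canon (b.canon (z + 1)) = z + 1 - (A v).canon (b.canon z)
          rw [b.canon_add_one, (A v).canon_add_one]; ring)
        (fun v hv => by
          obtain ⟨z, hz⟩ := hfix1 v (hW1 v hv)
          refine ⟨z, ?_⟩
          show z + 1 - (A v).canon (b.canon z) = 0
          rw [hz]; ring)
        (fun u hu v hv => by
          rcases eq_or_ne u v with rfl | huv
          · exact Or.inl (fun z => le_refl _)
          · rcases hord u v huv with h | h
            · refine Or.inr (fun z => ?_)
              show z + 1 - (A v).canon (b.canon z) ≤ z + 1 - (A u).canon (b.canon z)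
              have := h (b.canon z); linarith
            · refine Or.inl (fun z => ?_)
              show z + 1 - (A u).canon (b.canon z) ≤ z + 1 - (A v).canon (b.canon z)
              have := h (b.canon z); linarith)
      have hws : ∀ v ∈ W, ws + 1 ≤ (A v).canon (b.canon ws) := by
        intro v hv
        have h := hws' v hv
        have h' : ws + 1 - (A v).canon (b.canon ws) ≤ 0 := h
        linarith
      obtain ⟨v₀, hv₀⟩ := hWne
      have hwx : ws < b.canon ws := by
        have h1 := hws v₀ hv₀
        have h2 := (hdisp v₀ hv₀.1 (b.canon ws)).2
        linarith
      -- the supremum of the Z-leaves at b.canon ws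
      have hQbdd : ∀ x : ℝ, BddAbove ((fun u => (A u).canon (b.canon x)) '' Z) := by
        intro x
        refine ⟨b.canon x + 1, ?_⟩
        rintro r ⟨u, hu, rfl⟩
        exact le_of_lt (hdisp u hu.1 (b.canon x)).2
      have hQne : ∀ x : ℝ, ((fun u => (A u).canon (b.canon x)) '' Z).Nonempty :=
        fun x => hZne.image _
      set ℓ : ℝ := sSup ((fun u => (A u).canon (b.canon ws)) '' Z) with hℓ
      have hl_each : ∀ u ∈ Z, (A u).canon (b.canon ws) ≤ ℓ :=
        fun u hu => le_csSup (hQbdd ws) ⟨u, hu, rfl⟩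
      have hl_lb : b.canon ws < ℓ := by
        obtain ⟨u, hu⟩ := hZne
        exact lt_of_lt_of_le (hdisp u hu.1 (b.canon ws)).1 (hl_each u hu)
      have hstep1 : ws + 1 ≤ ℓ := by
        by_contra hlt
        push_neg at hlt
        have hwlt : ws + 1 < b.canon ws + 1 := by linarith
        have hclass : ∀ s : ℝ, s ≠ 0 → ℓ < (A s).canon (b.canon ws) →
            (A s).canon (b.canon ws) < ws + 1 →
            θ ≤ (A s).canon x₀ ∧ (A s).canon x₀ ≤ θ := by
          intro s hs h1 h2
          have hsZ : s ∉ Z := fun hsZ => absurd (hl_each s hsZ) (not_le.2 h1)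
          have hsW : s ∉ W := fun hsW => absurd (hws s hsW) (not_le.2 h2)
          constructor
          · by_contra h
            push_neg at h
            exact hsZ (hbelow s hs h)
          · by_contra h
            push_neg at h
            exact hsW ⟨hs, h⟩
        by_cases hbdex : ∃ s₀ : ℝ, s₀ ≠ 0 ∧ ℓ < (A s₀).canon (b.canon ws) ∧
            (A s₀).canon (b.canon ws) < ws + 1
        · obtain ⟨s₀, hs₀, hs₀1, hs₀2⟩ := hbdex
          obtain ⟨s, hs, h1, h2⟩ := orbit_dense hGrp hfree (b.canon ws) ℓ
            ((A s₀).canon (b.canon ws)) hl_lb hs₀1 (by linarith)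
          have hcs := hclass s hs h1 (lt_trans h2 hs₀2)
          have hcs₀ := hclass s₀ hs₀ hs₀1 hs₀2
          have hseq : s = s₀ := by
            by_contra hne
            rcases hord s s₀ hne with h | h
            · have := h x₀; linarith [hcs.1, hcs₀.2]
            · have := h x₀; linarith [hcs.2, hcs₀.1]
          rw [hseq] at h2
          exact absurd h2 (lt_irrefl _)
        · push_neg at hbdex
          obtain ⟨s, hs, h1, h2⟩ := orbit_dense hGrp hfree (b.canon ws) ℓ (ws + 1)
            hl_lb hlt hwlt
          exact absurd h2 (not_lt.2 (hbdex s hs h1))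
      -- the supremum lift
      set Qf : ℝ → ℝ := fun x => sSup ((fun u => (A u).canon (b.canon x)) '' Z) with hQf
      have hQmono : Monotone Qf := by
        intro x y hxy
        refine csSup_le (hQne x) ?_
        rintro r ⟨u, hu, rfl⟩
        refine le_trans ?_ (le_csSup (hQbdd y) ⟨u, hu, rfl⟩)
        exact (A u).canon_strictMono.monotone (b.canon_strictMono.monotone hxy)
      have hQper : ∀ x : ℝ, Qf (x + 1) = Qf x + 1 := by
        intro x
        apply le_antisymm
        · refine csSup_le (hQne _) ?_
          rintro r ⟨u, hu, rfl⟩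
          show (A u).canon (b.canon (x + 1)) ≤ Qf x + 1
          have he : (A u).canon (b.canon (x + 1)) = (A u).canon (b.canon x) + 1 := by
            rw [b.canon_add_one, (A u).canon_add_one]
          rw [he]
          have hmem : (A u).canon (b.canon x) ∈ ((fun u => (A u).canon (b.canon x)) '' Z) :=
            ⟨u, hu, rfl⟩
          exact (add_le_add_iff_right 1).2 (le_csSup (hQbdd x) hmem)
        · have h : ∀ r ∈ ((fun u => (A u).canon (b.canon x)) '' Z), r ≤ Qf (x + 1) - 1 := by
            rintro r ⟨u, hu, rfl⟩
            show (A u).canon (b.canon x) ≤ Qf (x + 1) - 1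
            have hmem : (A u).canon (b.canon (x + 1)) ∈
                ((fun u => (A u).canon (b.canon (x + 1))) '' Z) := ⟨u, hu, rfl⟩
            have hle := le_csSup (hQbdd (x + 1)) hmem
            have he : (A u).canon (b.canon (x + 1)) = (A u).canon (b.canon x) + 1 := by
              rw [b.canon_add_one, (A u).canon_add_one]
            rw [he] at hle
            have hQ1 : Qf (x + 1) = sSup ((fun u => (A u).canon (b.canon (x + 1))) '' Z) := rfl
            rw [hQ1]
            linarith
          have := csSup_le (hQne x) h
          linarith
      have hQw : ws + ((1 : ℤ) : ℝ) ≤ (mkLift Qf hQmono hQper) ws := by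
        push_cast
        show ws + 1 ≤ Qf ws
        exact hstep1
      have hQz : (mkLift Qf hQmono hQper) zs ≤ zs + ((0 : ℤ) : ℝ) := by
        push_cast
        show Qf zs ≤ zs + 0
        rw [add_zero]
        refine csSup_le (hQne zs) ?_
        rintro r ⟨u, hu, rfl⟩
        exact hzs u hu
      have t1 := CircleDeg1Lift.le_translationNumber_of_add_int_le _ hQw
      have t2 := CircleDeg1Lift.translationNumber_le_of_le_add_int _ hQz
      have : ((1 : ℤ) : ℝ) ≤ ((0 : ℤ) : ℝ) := le_trans t1 t2
      norm_num at this
    · -- all leaves have a fixed point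
      have hθeq : θ = x₀ + 1 := le_antisymm hθle (not_lt.1 hθtop)
      have hallZ : ∀ t : ℝ, t ≠ 0 → t ∈ Z := by
        intro t ht
        refine hbelow t ht ?_
        rw [hθeq]
        exact (hdisp t ht x₀).2
      have h1 : b.canon zs < zs := by
        have ha := hzs 1 (hallZ 1 one_ne_zero)
        have hb := (hdisp 1 one_ne_zero (b.canon zs)).1
        linarith
      have h2 : zs < b.canon zs + 1 := by
        have := hbc1 zs
        linarith
      obtain ⟨s, hs, hs1, hs2⟩ := orbit_dense hGrp hfree (b.canon zs) zs
        ((zs + (b.canon zs + 1)) / 2) h1 (by linarith) (by linarith)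
      have := hzs s (hallZ s hs)
      linarith
  · -- no leaf has a fixed point : all translation numbers are 1
    have hall1 : ∀ t : ℝ, t ≠ 0 → (leafComp A b t).translationNumber = 1 := by
      intro t ht
      rcases hk01 t ht with h0 | h1
      · exact absurd ⟨t, ht, h0⟩ hZne
      · exact h1
    have hTne : ({t : ℝ | t ≠ 0}).Nonempty := ⟨1, one_ne_zero⟩
    obtain ⟨ws, hws'⟩ := exists_common_point hTne
      (fun v z => z + 1 - (A v).canon (b.canon z))
      (fun v _ => by
        exact (continuous_id.add continuous_const).sub
          ((A v).canon_continuous.comp b.canon_continuous))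
      (fun v _ z => by
        show z + 1 + 1 - (A v).canon (b.canon (z + 1)) = z + 1 - (A v).canon (b.canon z)
        rw [b.canon_add_one, (A v).canon_add_one]; ring)
      (fun v hv => by
        obtain ⟨z, hz⟩ := hfix1 v (hall1 v hv)
        refine ⟨z, ?_⟩
        show z + 1 - (A v).canon (b.canon z) = 0
        rw [hz]; ring)
      (fun u hu v hv => by
        rcases eq_or_ne u v with rfl | huv
        · exact Or.inl (fun z => le_refl _)
        · rcases hord u v huv with h | h
          · refine Or.inr (fun z => ?_)
            show z + 1 - (A v).canon (b.canon z) ≤ z + 1 - (A u).canon (b.canon z)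
            have := h (b.canon z); linarith
          · refine Or.inl (fun z => ?_)
            show z + 1 - (A u).canon (b.canon z) ≤ z + 1 - (A v).canon (b.canon z)
            have := h (b.canon z); linarith)
    have hws : ∀ v : ℝ, v ≠ 0 → ws + 1 ≤ (A v).canon (b.canon ws) := by
      intro v hv
      have h := hws' v hv
      have h' : ws + 1 - (A v).canon (b.canon ws) ≤ 0 := h
      linarith
    have h1 : ws < b.canon ws := by
      have ha := hws 1 one_ne_zero
      have hb := (hdisp 1 one_ne_zero (b.canon ws)).2
      linarith
    have h2 : b.canon ws < ws + 1 := hbc2 ws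
    obtain ⟨s, hs, hs1, hs2⟩ := orbit_dense hGrp hfree (b.canon ws)
      ((b.canon ws + (ws + 1)) / 2) (ws + 1) (by linarith) (by linarith) (by linarith)
    have := hws s hs
    linarith

namespace HomeoZR

theorem iterate_add_int (f : HomeoZR) (n : ℕ) (x : ℝ) (m : ℤ) :
    f.toFun^[n] (x + m) = f.toFun^[n] x + m := by
  have h : Function.Commute f.toFun (· + (m : ℝ)) := f.toLift.commute_add_int m
  have := (h.iterate_left n) x
  simpa using this

theorem per_add_int (f : HomeoZR) (x : ℝ) (m : ℤ) (hx : x ∈ f.Per) : x + m ∈ f.Per := by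
  obtain ⟨n, hn, k, hk⟩ := hx
  exact ⟨n, hn, k, by rw [f.iterate_add_int, hk]; ring⟩

theorem per_preimage (f : HomeoZR) (m : ℤ) : (fun x : ℝ => x + (m : ℝ)) ⁻¹' f.Per = f.Per := by
  ext x
  constructor
  · intro hx
    have := f.per_add_int (x + m) (-m) hx
    simpa using this
  · intro hx
    exact f.per_add_int x m hx

theorem frontier_per_add_int (f : HomeoZR) (x : ℝ) (m : ℤ)
    (hx : x ∈ frontier f.Per) : x + (m : ℝ) ∈ frontier f.Per := by
  have e : (fun y : ℝ => y + (m : ℝ)) ⁻¹' frontier f.Per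
      = frontier ((fun y : ℝ => y + (m : ℝ)) ⁻¹' f.Per) :=
    (Homeomorph.addRight (m : ℝ)).preimage_frontier f.Per
  rw [f.per_preimage] at e
  have hx' : x ∈ (fun y : ℝ => y + (m : ℝ)) ⁻¹' frontier f.Per := by rw [e]; exact hx
  exact hx'

/-- every periodic point is a fixed point when the translation number is an integer -/
theorem per_eq_fixS (a : HomeoZR) {ma : ℤ} (hma : a.transNum = (ma : ℝ)) :
    a.Per = a.FixS := by
  apply Set.Subset.antisymm
  · rintro x ⟨n, hn, m, hx⟩
    have hpow : (a.toLift ^ n) x = x + m := by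
      rw [CircleDeg1Lift.coe_pow]
      exact hx
    have hτ := CircleDeg1Lift.translationNumber_of_map_pow_eq_add_int a.toLift hpow hn
    rw [show a.toLift.translationNumber = a.transNum from rfl, hma] at hτ
    have hm : (m : ℝ) = (n : ℝ) * (ma : ℝ) := by
      have hn' : (n : ℝ) ≠ 0 := Nat.cast_ne_zero.2 hn.ne'
      rw [eq_div_iff hn'] at hτ
      rw [← hτ]
      ring
    have hiter : (⇑a.toLift)^[n] x = x + (n : ℕ) * (ma : ℤ) := by
      show a.toFun^[n] x = x + ((n : ℝ) * ((ma : ℤ) : ℝ))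
      rw [hx, hm]
    have := (CircleDeg1Lift.iterate_pos_eq_iff a.toLift (x := x) (m := ma) hn).1 hiter
    exact ⟨ma, this⟩
  · rintro x ⟨m, hm⟩
    exact ⟨1, one_pos, m, by simpa using hm⟩

theorem q_eq_one (b : HomeoZR) {mb : ℤ} (hmb : b.transNum = (mb : ℝ)) : b.q = 1 := by
  obtain ⟨x, hx⟩ := (CircleDeg1Lift.translationNumber_eq_int_iff b.toLift b.continuous'
    (m := mb)).1 hmb
  have h1 : (1 : ℕ) ∈ {n : ℕ | 0 < n ∧ ∃ x : ℝ, ∃ m : ℤ, b.toFun^[n] x = x + m} :=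
    ⟨one_pos, x, mb, hx⟩
  refine le_antisymm (Nat.sInf_le h1) ?_
  rcases Nat.eq_zero_or_pos (sInf {n : ℕ | 0 < n ∧ ∃ x : ℝ, ∃ m : ℤ, b.toFun^[n] x = x + m})
    with h0 | hpos
  · exfalso
    rcases Nat.sInf_eq_zero.1 h0 with h | h
    · exact absurd h.1 (lt_irrefl 0)
    · rw [h] at h1
      exact h1
  · exact hpos

theorem p_eq_zero (b : HomeoZR) {mb : ℤ} (hmb : b.transNum = (mb : ℝ)) : b.p = 0 := by
  refine Nat.sInf_eq_zero.2 (Or.inl ?_)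
  refine ⟨mb, ?_⟩
  rw [hmb]
  norm_num

end HomeoZR

theorem delta_eq (A : ℝ → HomeoZR) (b : HomeoZR) {mb : ℤ} (hmb : b.transNum = (mb : ℝ))
    (x t : ℝ) : delta A b x t = (A t).canon (b.canon x) - x := by
  rw [delta, b.q_eq_one hmb, b.p_eq_zero hmb]
  simp

theorem gap_of_closed {Δ : Set ℝ} (hcl : IsClosed Δ) {y : ℝ} (hy : y ∉ Δ)
    (hlo : (Δ ∩ Set.Iic y).Nonempty) (hhi : (Δ ∩ Set.Ici y).Nonempty) :
    ∃ p q : ℝ, p ∈ Δ ∧ q ∈ Δ ∧ p < y ∧ y < q ∧ ∀ z ∈ Δ, z ∉ Set.Ioo p q := by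
  have hbddA : BddAbove (Δ ∩ Set.Iic y) := ⟨y, fun z hz => hz.2⟩
  have hbddB : BddBelow (Δ ∩ Set.Ici y) := ⟨y, fun z hz => hz.2⟩
  set p : ℝ := sSup (Δ ∩ Set.Iic y) with hp
  set q : ℝ := sInf (Δ ∩ Set.Ici y) with hq
  have hpS : p ∈ Δ ∩ Set.Iic y := (hcl.inter isClosed_Iic).csSup_mem hlo hbddA
  have hqS : q ∈ Δ ∩ Set.Ici y := (hcl.inter isClosed_Ici).csInf_mem hhi hbddB
  refine ⟨p, q, hpS.1, hqS.1, lt_of_le_of_ne hpS.2 (fun h => hy (h ▸ hpS.1)),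
    lt_of_le_of_ne hqS.2 (fun h => hy (h.symm ▸ hqS.1)), ?_⟩
  rintro z hz ⟨hz1, hz2⟩
  rcases le_or_gt z y with h | h
  · exact absurd (le_csSup hbddA ⟨hz, h⟩) (not_le.2 hz1)
  · exact absurd (csInf_le hbddB ⟨hz, le_of_lt h⟩) (not_le.2 hz2)

section NonemptyDelta

variable {a : HomeoZR} {A : ℝ → HomeoZR}

include a in
theorem orbit_image_iff
    (hGrp : ∀ s t : ℝ, (A (s + t)).toFun = (A s).toFun ∘ (A t).toFun)
    (hfixΔ : ∀ t : ℝ, t ≠ 0 → (A t).FixS = frontier a.Per)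
    (hpos : ∀ t : ℝ, 0 < t → ∀ x, x ∉ frontier a.Per → x < (A t).canon x)
    {p q y : ℝ} (hpΔ : p ∈ frontier a.Per) (hqΔ : q ∈ frontier a.Per)
    (hpy : p < y) (hyq : y < q) (hgap : ∀ z ∈ frontier a.Per, z ∉ Set.Ioo p q)
    (x : ℝ) : (∃ t : ℝ, (A t).canon y = x) ↔ (p < x ∧ x < q) := by
  classical
  -- integer translation numbers, with basepoint p
  have hτ : ∀ t : ℝ, ∃ m : ℤ, (A t).toFun p = p + m ∧ (A t).transNum = (m : ℝ) := by
    intro t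
    rcases eq_or_ne t 0 with rfl | ht
    · refine ⟨0, by rw [A_zero hGrp]; simp, ?_⟩
      have : (A 0).toFun p = p + ((0 : ℤ) : ℝ) := by rw [A_zero hGrp]; simp
      simpa [HomeoZR.transNum] using CircleDeg1Lift.translationNumber_of_eq_add_int (A 0).toLift this
    · have hpfix : p ∈ (A t).FixS := by rw [hfixΔ t ht]; exact hpΔ
      obtain ⟨m, hm⟩ := hpfix
      exact ⟨m, hm, CircleDeg1Lift.translationNumber_of_eq_add_int (A t).toLift hm⟩
  choose M hM1 hM2 using hτ
  have hMfloor : ∀ t : ℝ, (⌊(A t).transNum⌋ : ℝ) = (M t : ℝ) := by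
    intro t
    rw [hM2 t, Int.floor_intCast]
  have hcanon : ∀ t : ℝ, ∀ z : ℝ, (A t).canon z = (A t).toFun z - M t := by
    intro t z
    rw [HomeoZR.canon_def, hMfloor]
  -- canonical lifts fix the frontier pointwise
  have hfixcanon : ∀ t : ℝ, ∀ z ∈ frontier a.Per, (A t).canon z = z := by
    intro t z hz
    rcases eq_or_ne t 0 with rfl | ht
    · rw [hcanon, A_zero hGrp]
      have hM0 : M 0 = 0 := by
        have h0 : p = p + ((M 0 : ℤ) : ℝ) := (A_zero hGrp p).symm.trans (hM1 0)
        have h1 : ((M 0 : ℤ) : ℝ) = 0 := by linarith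
        exact_mod_cast h1
      rw [hM0]
      simp
    · have hzfix : z ∈ (A t).FixS := by rw [hfixΔ t ht]; exact hz
      obtain ⟨k, hk⟩ := hzfix
      have hτk := CircleDeg1Lift.translationNumber_of_eq_add_int (A t).toLift hk
      have hkM : (k : ℝ) = (M t : ℝ) := by rw [← hτk]; exact hM2 t
      rw [hcanon, hk, ← hkM]
      ring
  have hM0 : M 0 = 0 := by
    have h0 : p = p + ((M 0 : ℤ) : ℝ) := (A_zero hGrp p).symm.trans (hM1 0)
    have h1 : ((M 0 : ℤ) : ℝ) = 0 := by linarith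
    exact_mod_cast h1
  have hMadd : ∀ s t : ℝ, (M (s + t) : ℝ) = M s + M t := by
    intro s t
    have h1 := hM1 (s + t)
    have h2 : (A (s + t)).toFun p = (A s).toFun ((A t).toFun p) := congrFun (hGrp s t) p
    rw [hM1 t, (A s).map_add_int', hM1 s] at h2
    rw [h2] at h1
    push_cast at h1 ⊢
    linarith
  have hcoc : ∀ s t : ℝ, ∀ z : ℝ, (A (s + t)).canon z = (A s).canon ((A t).canon z) := by
    intro s t z
    rw [hcanon, hcanon, hcanon]
    have h2 : (A (s + t)).toFun z = (A s).toFun ((A t).toFun z) := congrFun (hGrp s t) z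
    rw [h2]
    have h3 : (A s).toFun ((A t).toFun z - M t) = (A s).toFun ((A t).toFun z) - M t := by
      have := (A s).map_add_int' ((A t).toFun z) (-(M t))
      push_cast at this
      rw [show (A t).toFun z - (M t : ℝ) = (A t).toFun z + (-(M t) : ℝ) by ring]
      rw [show ((A t).toFun z + (-(M t) : ℝ)) = ((A t).toFun z + ((-(M t) : ℤ) : ℝ)) by push_cast; ring]
      rw [(A s).map_add_int']
      push_cast
      ring
    rw [h3, hMadd]
    ring
  have hinv : ∀ t : ℝ, ∀ z : ℝ, (A (-t)).canon ((A t).canon z) = z := by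
    intro t z
    have := hcoc (-t) t z
    rw [neg_add_cancel] at this
    rw [← this, hcanon, A_zero hGrp, hM0]
    simp
  have hnotΔ : ∀ t : ℝ, ∀ z, z ∉ frontier a.Per → (A t).canon z ∉ frontier a.Per := by
    intro t z hz hc
    have h1 := hfixcanon (-t) _ hc
    rw [← hinv t z] at hz
    rw [h1] at hz
    exact hz hc
  have hposneg : ∀ t : ℝ, t < 0 → ∀ z, z ∉ frontier a.Per → (A t).canon z < z := by
    intro t ht z hz
    have hc : (A t).canon z ∉ frontier a.Per := hnotΔ t z hz
    have := hpos (-t) (by linarith) _ hc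
    rw [hinv t z] at this
    exact this
  have hmonot : ∀ s t : ℝ, s < t → ∀ z, z ∉ frontier a.Per →
      (A s).canon z < (A t).canon z := by
    intro s t hst z hz
    have h1 : (A t).canon z = (A (t - s)).canon ((A s).canon z) := by
      rw [← hcoc]
      norm_num
    rw [h1]
    exact hpos (t - s) (by linarith) _ (hnotΔ s z hz)
  -- the orbit of y
  set c : ℝ → ℝ := fun t => (A t).canon y with hc
  have hyΔ : y ∉ frontier a.Per := fun h => hgap y h ⟨hpy, hyq⟩
  have hc0 : c 0 = y := by
    rw [hc]
    show (A 0).canon y = y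
    rw [hcanon, A_zero hGrp, hM0]
    simp
  have hcy : ∀ t, p < c t ∧ c t < q := by
    intro t
    constructor
    · have := (A t).canon_strictMono hpy
      rwa [hfixcanon t p hpΔ] at this
    · have := (A t).canon_strictMono hyq
      rwa [hfixcanon t q hqΔ] at this
  have hcmono : StrictMono c := by
    intro s t hst
    exact hmonot s t hst y hyΔ
  constructor
  · rintro ⟨t, rfl⟩
    exact hcy t
  · rintro ⟨hx1, hx2⟩
    -- range of c
    have hRne : (Set.range c).Nonempty := ⟨c 0, 0, rfl⟩
    have hRbddA : BddAbove (Set.range c) := ⟨q, by rintro r ⟨t, rfl⟩; exact le_of_lt (hcy t).2⟩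
    have hRbddB : BddBelow (Set.range c) := ⟨p, by rintro r ⟨t, rfl⟩; exact le_of_lt (hcy t).1⟩
    have himg : ∀ u : ℝ, (A u).canon '' (Set.range c) = Set.range c := by
      intro u
      ext z
      constructor
      · rintro ⟨w, ⟨t, rfl⟩, rfl⟩
        exact ⟨u + t, hcoc u t y⟩
      · rintro ⟨t, rfl⟩
        refine ⟨c (t - u), ⟨t - u, rfl⟩, ?_⟩
        show (A u).canon ((A (t - u)).canon y) = c t
        rw [← hcoc]
        norm_num
        rfl
    have hsup : sSup (Set.range c) = q := by
      set r : ℝ := sSup (Set.range c) with hr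
      have h1 : ∀ u : ℝ, (A u).canon r = r := by
        intro u
        have := Monotone.map_csSup_of_continuousAt ((A u).canon_continuous.continuousAt)
          (A u).canon_strictMono.monotone hRne hRbddA
        rw [himg u] at this
        exact this
      have hrΔ : r ∈ frontier a.Per := by
        by_contra hrn
        have := hpos 1 one_pos r hrn
        rw [h1 1] at this
        exact lt_irrefl _ this
      have hpr : p < r := lt_of_lt_of_le (lt_of_lt_of_le hpy (by
        rw [← hc0]; exact le_csSup hRbddA ⟨0, rfl⟩)) (le_refl _)
      have hrq : r ≤ q := csSup_le hRne (by rintro z ⟨t, rfl⟩; exact le_of_lt (hcy t).2)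
      rcases lt_or_eq_of_le hrq with h | h
      · exact absurd ⟨hpr, h⟩ (hgap r hrΔ)
      · exact h
    have hinf : sInf (Set.range c) = p := by
      set r : ℝ := sInf (Set.range c) with hr
      have h1 : ∀ u : ℝ, (A u).canon r = r := by
        intro u
        have := Monotone.map_csInf_of_continuousAt ((A u).canon_continuous.continuousAt)
          (A u).canon_strictMono.monotone hRne hRbddB
        rw [himg u] at this
        exact this
      have hrΔ : r ∈ frontier a.Per := by
        by_contra hrn
        have := hpos 1 one_pos r hrn
        rw [h1 1] at this
        exact lt_irrefl _ this
      have hrq : r < q := lt_of_le_of_lt (csInf_le hRbddB ⟨0, rfl⟩) (by rw [hc0]; exact hyq)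
      have hpr : p ≤ r := le_csInf hRne (by rintro z ⟨t, rfl⟩; exact le_of_lt (hcy t).1)
      rcases lt_or_eq_of_le hpr with h | h
      · exact absurd ⟨h, hrq⟩ (hgap r hrΔ)
      · exact h.symm
    -- no gaps on the left
    have hioone : ∀ s : ℝ, (c '' Set.Iio s).Nonempty := fun s => ⟨c (s - 1), s - 1, by norm_num, rfl⟩
    have hioobdd : ∀ s : ℝ, BddAbove (c '' Set.Iio s) := by
      intro s
      exact ⟨c s, by rintro z ⟨t, ht, rfl⟩; exact le_of_lt (hcmono ht)⟩
    have hleft : ∀ s : ℝ, sSup (c '' Set.Iio s) = c s := by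
      by_contra hbad
      push_neg at hbad
      obtain ⟨s₀, hs₀⟩ := hbad
      have hlt : ∀ s : ℝ, sSup (c '' Set.Iio s) ≤ c s := by
        intro s
        exact csSup_le (hioone s) (by rintro z ⟨t, ht, rfl⟩; exact le_of_lt (hcmono ht))
      have hs₀lt : sSup (c '' Set.Iio s₀) < c s₀ := lt_of_le_of_ne (hlt s₀) hs₀
      set G : ℝ → ℝ := fun s => sSup (c '' Set.Iio s) with hG
      have hGmap : ∀ u s : ℝ, (A u).canon (G s) = G (u + s) := by
        intro u s
        have himg2 : (A u).canon '' (c '' Set.Iio s) = c '' Set.Iio (u + s) := by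
          ext z
          constructor
          · rintro ⟨w, ⟨t, ht, rfl⟩, rfl⟩
            exact ⟨u + t, by simpa using ht, hcoc u t y⟩
          · rintro ⟨t, ht, rfl⟩
            refine ⟨c (t - u), ⟨t - u, by simp only [Set.mem_Iio] at ht ⊢; linarith, rfl⟩, ?_⟩
            show (A u).canon ((A (t - u)).canon y) = c t
            rw [← hcoc]
            norm_num
            rfl
        have := Monotone.map_csSup_of_continuousAt ((A u).canon_continuous.continuousAt)
          (A u).canon_strictMono.monotone (hioone s) (hioobdd s)
        rw [himg2] at this
        exact this
      have hgapne : ∀ s : ℝ, G s < c s := by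
        intro s
        have h1 : (A (s - s₀)).canon (G s₀) = G s := by
          rw [hGmap]
          norm_num
        have h2 : (A (s - s₀)).canon (c s₀) = c s := by
          show (A (s - s₀)).canon ((A s₀).canon y) = c s
          rw [← hcoc]
          norm_num
          rfl
        rw [← h1, ← h2]
        exact (A (s - s₀)).canon_strictMono hs₀lt
      have hdisj : ∀ s s' : ℝ, s < s' → c s ≤ G s' := by
        intro s s' hss
        exact le_csSup (hioobdd s') ⟨s, hss, rfl⟩
      have hrat : ∀ s : ℝ, ∃ r : ℚ, G s < (r : ℝ) ∧ (r : ℝ) < c s :=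
        fun s => exists_rat_btwn (hgapne s)
      choose rr hrr using hrat
      have hrrinj : Function.Injective rr := by
        intro s s' h
        by_contra hss
        have key : ∀ v v' : ℝ, v < v' → (rr v : ℝ) = (rr v' : ℝ) → False := by
          intro v v' hvv hrrv
          have h1 : (rr v : ℝ) < c v := (hrr v).2
          have h2 : G v' < (rr v' : ℝ) := (hrr v').1
          have h3 := hdisj v v' hvv
          rw [hrrv] at h1
          linarith
        rcases lt_or_gt_of_ne hss with hlt | hgt
        · exact key s s' hlt (by rw [h])
        · exact key s' s hgt (by rw [h])
      have : Countable ℝ := hrrinj.countable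
      exact Cardinal.not_countable_real Set.countable_univ
    -- no gaps on the right
    have hioine : ∀ s : ℝ, (c '' Set.Ioi s).Nonempty := fun s => ⟨c (s + 1), s + 1, by norm_num, rfl⟩
    have hioibdd : ∀ s : ℝ, BddBelow (c '' Set.Ioi s) := by
      intro s
      exact ⟨c s, by rintro z ⟨t, ht, rfl⟩; exact le_of_lt (hcmono ht)⟩
    have hright : ∀ s : ℝ, sInf (c '' Set.Ioi s) = c s := by
      by_contra hbad
      push_neg at hbad
      obtain ⟨s₀, hs₀⟩ := hbad
      have hlt : ∀ s : ℝ, c s ≤ sInf (c '' Set.Ioi s) := by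
        intro s
        exact le_csInf (hioine s) (by rintro z ⟨t, ht, rfl⟩; exact le_of_lt (hcmono ht))
      have hs₀lt : c s₀ < sInf (c '' Set.Ioi s₀) := lt_of_le_of_ne (hlt s₀) (Ne.symm hs₀)
      set G : ℝ → ℝ := fun s => sInf (c '' Set.Ioi s) with hG
      have hGmap : ∀ u s : ℝ, (A u).canon (G s) = G (u + s) := by
        intro u s
        have himg2 : (A u).canon '' (c '' Set.Ioi s) = c '' Set.Ioi (u + s) := by
          ext z
          constructor
          · rintro ⟨w, ⟨t, ht, rfl⟩, rfl⟩
            exact ⟨u + t, by simp only [Set.mem_Ioi] at ht ⊢; linarith, hcoc u t y⟩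
          · rintro ⟨t, ht, rfl⟩
            refine ⟨c (t - u), ⟨t - u, by simp only [Set.mem_Ioi] at ht ⊢; linarith, rfl⟩, ?_⟩
            show (A u).canon ((A (t - u)).canon y) = c t
            rw [← hcoc]
            norm_num
            rfl
        have := Monotone.map_csInf_of_continuousAt ((A u).canon_continuous.continuousAt)
          (A u).canon_strictMono.monotone (hioine s) (hioibdd s)
        rw [himg2] at this
        exact this
      have hgapne : ∀ s : ℝ, c s < G s := by
        intro s
        have h1 : (A (s - s₀)).canon (G s₀) = G s := by
          rw [hGmap]
          norm_num
        have h2 : (A (s - s₀)).canon (c s₀) = c s := by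
          show (A (s - s₀)).canon ((A s₀).canon y) = c s
          rw [← hcoc]
          norm_num
          rfl
        rw [← h1, ← h2]
        exact (A (s - s₀)).canon_strictMono hs₀lt
      have hdisj : ∀ s s' : ℝ, s < s' → G s ≤ c s' := by
        intro s s' hss
        exact csInf_le (hioibdd s) ⟨s', hss, rfl⟩
      have hrat : ∀ s : ℝ, ∃ r : ℚ, c s < (r : ℝ) ∧ (r : ℝ) < G s :=
        fun s => exists_rat_btwn (hgapne s)
      choose rr hrr using hrat
      have hrrinj : Function.Injective rr := by
        intro s s' h
        by_contra hss
        have key : ∀ v v' : ℝ, v < v' → (rr v : ℝ) = (rr v' : ℝ) → False := by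
          intro v v' hvv hrrv
          have h1 : (rr v : ℝ) < G v := (hrr v).2
          have h2 : c v' < (rr v' : ℝ) := (hrr v').1
          have h3 := hdisj v v' hvv
          rw [hrrv] at h1
          linarith
        rcases lt_or_gt_of_ne hss with hlt | hgt
        · exact key s s' hlt (by rw [h])
        · exact key s' s hgt (by rw [h])
      have : Countable ℝ := hrrinj.countable
      exact Cardinal.not_countable_real Set.countable_univ
    -- now find the time hitting x
    set T : Set ℝ := {t : ℝ | c t ≤ x} with hT
    have hTne : T.Nonempty := by
      have : sInf (Set.range c) < x := by rw [hinf]; exact hx1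
      obtain ⟨z, ⟨t, rfl⟩, hz⟩ := exists_lt_of_csInf_lt hRne this
      exact ⟨t, le_of_lt hz⟩
    obtain ⟨z₁, ⟨t₁, rfl⟩, hz₁⟩ : ∃ z ∈ Set.range c, x < z := by
      have : x < sSup (Set.range c) := by rw [hsup]; exact hx2
      exact exists_lt_of_lt_csSup hRne this
    have hTbdd : BddAbove T := by
      refine ⟨t₁, fun t ht => ?_⟩
      by_contra hc'
      push_neg at hc'
      have := hcmono hc'
      have h2 : c t ≤ x := ht
      linarith
    set s : ℝ := sSup T with hs
    have hle : c s ≤ x := by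
      rw [← hleft s]
      refine csSup_le (hioone s) ?_
      rintro z ⟨t, ht, rfl⟩
      obtain ⟨t', ht', htt'⟩ := exists_lt_of_lt_csSup hTne ht
      exact le_trans (le_of_lt (hcmono htt')) ht'
    have hge : x ≤ c s := by
      rw [← hright s]
      refine le_csInf (hioine s) ?_
      rintro z ⟨t, ht, rfl⟩
      have htT : t ∉ T := by
        intro hmem
        exact absurd (le_csSup hTbdd hmem) (not_le.2 ht)
      have : x < c t := by
        by_contra hcc
        push_neg at hcc
        exact htT hcc
      exact le_of_lt this
    exact ⟨s, le_antisymm hle hge⟩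

end NonemptyDelta

theorem frontierN_subset_frontierFix' (a b : HomeoZR)
    (ha0 : ∃ m : ℤ, a.transNum = (m : ℝ))
    (hb0 : ∃ m : ℤ, b.transNum = (m : ℝ))
    (A : ℝ → HomeoZR) (hA : PosFamily a A)
    (hconst : ∀ t : ℝ, ∃ m : ℤ, ((A t).comp b).transNum = b.transNum + m)
    (hP : Pset A b = ∅) :
    frontier (Nset A b) ⊆ frontier a.FixS ∪ b.toFun ⁻¹' frontier a.FixS := by
  classical
  intro x hx
  by_contra hnot
  rw [Set.mem_union] at hnot
  push_neg at hnot
  obtain ⟨hx1, hx2⟩ := hnot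
  obtain ⟨ma, hma⟩ := ha0
  obtain ⟨mb, hmb⟩ := hb0
  have hPF : frontier a.FixS = frontier a.Per := by rw [a.per_eq_fixS hma]
  rw [hPF] at hx1
  have hx2' : b.toFun x ∉ frontier a.Per := by
    rw [← hPF]
    exact fun h => hx2 (Set.mem_preimage.2 h)
  by_cases hΔ : frontier a.Per = ∅
  · exact (deltaEmpty_false b A hA.1 (fun u hu => (hA.2.2.1 u hu).trans hΔ)
      ⟨mb, hmb⟩ hconst).elim
  · obtain ⟨z₀, hz₀⟩ := Set.nonempty_iff_ne_empty.2 hΔ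
    have hyeq : b.canon x + ((mb : ℤ) : ℝ) = b.toFun x := by
      rw [HomeoZR.canon_def, hmb, Int.floor_intCast]
      ring
    have hyΔ : b.canon x ∉ frontier a.Per := by
      intro h
      have := a.frontier_per_add_int _ mb h
      rw [hyeq] at this
      exact hx2' this
    have hlo : ∀ w : ℝ, (frontier a.Per ∩ Set.Iic w).Nonempty := by
      intro w
      refine ⟨z₀ + ((⌊w - z₀⌋ : ℤ) : ℝ), a.frontier_per_add_int _ _ hz₀, ?_⟩
      simp only [Set.mem_Iic]
      have := Int.floor_le (w - z₀)
      linarith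
    have hhi : ∀ w : ℝ, (frontier a.Per ∩ Set.Ici w).Nonempty := by
      intro w
      refine ⟨z₀ + ((⌊w - z₀⌋ + 1 : ℤ) : ℝ), a.frontier_per_add_int _ _ hz₀, ?_⟩
      simp only [Set.mem_Ici]
      push_cast
      have := Int.lt_floor_add_one (w - z₀)
      linarith
    obtain ⟨p, q, hpΔ, hqΔ, hpy, hyq, hgap⟩ :=
      gap_of_closed isClosed_frontier hyΔ (hlo _) (hhi _)
    have hchar : ∀ x' : ℝ, p < b.canon x' → b.canon x' < q →
        (x' ∉ Nset A b ↔ (p < x' ∧ x' < q)) := by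
      intro x' h1 h2
      have hiff := orbit_image_iff (a := a) hA.1 hA.2.2.1 hA.2.2.2 hpΔ hqΔ h1 h2 hgap x'
      rw [← hiff]
      constructor
      · intro h
        have h' : ¬ ∀ t, delta A b x' t ≠ 0 := h
        push_neg at h'
        obtain ⟨t, ht⟩ := h'
        rw [delta_eq A b hmb] at ht
        exact ⟨t, by linarith [sub_eq_zero.1 ht]⟩
      · rintro ⟨t, ht⟩
        intro hmem
        have := hmem t
        rw [delta_eq A b hmb, ht] at this
        simp at this
    by_cases hxI : p < x ∧ x < q
    · have hV : IsOpen (Set.Ioo p q ∩ b.canon ⁻¹' Set.Ioo p q) :=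
        isOpen_Ioo.inter (isOpen_Ioo.preimage b.canon_continuous)
      have hxV : x ∈ Set.Ioo p q ∩ b.canon ⁻¹' Set.Ioo p q :=
        ⟨⟨hxI.1, hxI.2⟩, ⟨hpy, hyq⟩⟩
      have hxcl : x ∈ closure (Nset A b) := by
        rw [frontier_eq_closure_inter_closure] at hx
        exact hx.1
      obtain ⟨x', hx'V, hx'N⟩ := (mem_closure_iff.1 hxcl) _ hV hxV
      have : x' ∉ Nset A b :=
        (hchar x' hx'V.2.1 hx'V.2.2).2 ⟨hx'V.1.1, hx'V.1.2⟩
      exact this hx'N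
    · obtain ⟨p', q', hp'Δ, hq'Δ, hp'x, hxq', hgap'⟩ :=
        gap_of_closed isClosed_frontier hx1 (hlo _) (hhi _)
      have hdisj : ∀ w : ℝ, p' < w → w < q' → ¬(p < w ∧ w < q) := by
        rintro w h1 h2 ⟨h3, h4⟩
        rcases lt_trichotomy p p' with hpp | hpp | hpp
        · exact hgap p' hp'Δ ⟨hpp, lt_trans h1 h4⟩
        · rcases lt_trichotomy q q' with hqq | hqq | hqq
          · refine hgap' q hqΔ ⟨?_, hqq⟩
            rw [← hpp]
            exact lt_trans hpy hyq
          · exact hxI ⟨by rw [hpp]; exact hp'x, by rw [hqq]; exact hxq'⟩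
          · refine hgap q' hq'Δ ⟨?_, hqq⟩
            rw [hpp]
            exact lt_trans h1 h2
        · exact hgap' p hpΔ ⟨hpp, lt_trans h3 h2⟩
      have hV : IsOpen (Set.Ioo p' q' ∩ b.canon ⁻¹' Set.Ioo p q) :=
        isOpen_Ioo.inter (isOpen_Ioo.preimage b.canon_continuous)
      have hxV : x ∈ Set.Ioo p' q' ∩ b.canon ⁻¹' Set.Ioo p q :=
        ⟨⟨hp'x, hxq'⟩, ⟨hpy, hyq⟩⟩
      have hxcl : x ∈ closure (Nset A b)ᶜ := by
        rw [frontier_eq_closure_inter_closure] at hx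
        exact hx.2
      obtain ⟨x', hx'V, hx'N⟩ := (mem_closure_iff.1 hxcl) _ hV hxV
      have hx'mem : p < x' ∧ x' < q :=
        (hchar x' hx'V.2.1 hx'V.2.2).1 hx'N
      exact hdisj x' hx'V.1.1 hx'V.1.2 hx'mem


/-- Lemma 6.2, in the zero rotation number setting. If
`rot(a) = rot(b) = 0` and `P(a,b) = ∅`, then
`∂N(a,b) ⊆ ∂Fix(a) ∪ b⁻¹(∂Fix(a))`. -/
theorem frontierN_subset_frontierFix (a b : HomeoZR)
    (ha0 : ∃ m : ℤ, a.transNum = (m : ℝ))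
    (hb0 : ∃ m : ℤ, b.transNum = (m : ℝ))
    (A : ℝ → HomeoZR) (hA : PosFamily a A)
    (hconst : ∀ t : ℝ, ∃ m : ℤ, ((A t).comp b).transNum = b.transNum + m)
    (hP : Pset A b = ∅) :
    frontier (Nset A b) ⊆ frontier a.FixS ∪ b.toFun ⁻¹' frontier a.FixS := by
  exact frontierN_subset_frontierFix' a b ha0 hb0 A hA hconst hP
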